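/- arXiv:0903.1132 — 3 statements merged into one kernel-verified Lean document; each statement's English description precedes it below -/
import Mathlib

section
/- Let a > 0 and let γ : [0,L] → ℝ² be a C² unit-speed curve with positive geodesic curvature from (a,0) to (-a,b) for some b ∈ ℝ, whose tangent direction is γ'(t) = e^{iθ(t)} for a strictly increasing continuous θ with π/2 ≤ θ(0) < π and π < θ(L) ≤ 3π/2. Then min{ k_γ(t) : t ∈ [0,L] } ≤ a⁻¹. -/
open Real Set Complex

/-- Real inner product on ℂ viewed as ℝ². -/
noncomputable def inner2 (x y : ℂ) : ℝ := x.re * y.re + x.im * y.im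

/-- Signed geodesic curvature of a unit-speed planar curve (J = multiplication by I). -/
noncomputable def curvU (γ : ℝ → ℂ) (t : ℝ) : ℝ :=
  inner2 (deriv (deriv γ) t) (Complex.I * deriv γ t)

/-- Signed geodesic curvature of a regular planar curve. -/
noncomputable def curvR (γ : ℝ → ℂ) (t : ℝ) : ℝ :=
  (‖deriv γ t‖ ^ 3)⁻¹ * inner2 (deriv (deriv γ) t) (Complex.I * deriv γ t)

/-- The closed curve γ ⊕ [-a,a]: γ on [0,L] followed by the segment from (-a,0) to (a,0). -/
noncomputable def concatSeg (γ : ℝ → ℂ) (L a : ℝ) : ℝ → ℂ :=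
  fun t => if t ≤ L then γ t else Complex.ofReal (-a + (t - L))

/-!
Suppose every curvature exceeds `a⁻¹`. Along the curve, `F = a · Im γ' - Re γ` has derivative
`(a k - 1) cos θ`, which is negative because the tangent points into the left half-plane on the
open interval. Hence `F L < F 0`, while the boundary data give
`F 0 = a (sin θ(0) - 1) ≤ 0 ≤ a (sin θ(L) + 1) = F L`.
-/

open Filter Topology

lemma inner2_eq_inner (x y : ℂ) : inner2 x y = inner ℝ x y := by
  simp only [inner2, Complex.inner, mul_re, conj_re, conj_im]
  ring

lemma inner2_deriv_self_eq_zero {f : ℝ → ℂ} {t : ℝ} (hf : DifferentiableAt ℝ f t)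
    (hnorm : ∀ᶠ s in 𝓝 t, ‖f s‖ = 1) : inner2 (deriv f t) (f t) = 0 := by
  have hsq : HasDerivAt (‖f ·‖ ^ 2) (2 * inner ℝ (f t) (deriv f t)) t := hf.hasDerivAt.norm_sq
  have hconst : HasDerivAt (‖f ·‖ ^ 2) 0 t :=
    (hasDerivAt_const t (1 : ℝ)).congr_of_eventuallyEq
      (hnorm.mono fun s hs => by simp [hs])
  rw [inner2_eq_inner, real_inner_comm]
  linarith [hsq.unique hconst]

/-- A unit vector `z` and `w ⟂ z` satisfy `w = ⟨w, I z⟩ • I z`. -/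
lemma im_eq_inner2_I_mul_mul_re {w z : ℂ} (hz : ‖z‖ = 1) (horth : inner2 w z = 0) :
    w.im = inner2 w (I * z) * z.re := by
  have hz2 : z.re ^ 2 + z.im ^ 2 = 1 := by
    have := Complex.sq_norm z
    rw [hz, normSq_apply] at this
    linarith
  simp only [inner2, mul_re, mul_im, I_re, I_im] at horth ⊢
  linear_combination z.im * horth - w.im * hz2

lemma hasDerivAt_mul_im_deriv_sub_re {γ : ℝ → ℂ} (hγ : ContDiff ℝ 2 γ) (a : ℝ) {t : ℝ}
    (hunit : ∀ᶠ s in 𝓝 t, ‖deriv γ s‖ = 1) :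
    HasDerivAt (fun s => a * (deriv γ s).im - (γ s).re)
      ((a * curvU γ t - 1) * (deriv γ t).re) t := by
  have hγ' : ContDiff ℝ 1 (deriv γ) := hγ.iterate_deriv' 1 1
  have hdγ : HasDerivAt γ (deriv γ t) t :=
    (hγ.differentiable (by norm_num) t).hasDerivAt
  have hddγ : HasDerivAt (deriv γ) (deriv (deriv γ) t) t :=
    (hγ'.differentiable one_ne_zero t).hasDerivAt
  have hγ''_im : (deriv (deriv γ) t).im = curvU γ t * (deriv γ t).re :=
    im_eq_inner2_I_mul_mul_re hunit.self_of_nhds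
      (inner2_deriv_self_eq_zero (hγ'.differentiable one_ne_zero t) hunit)
  have hre : HasDerivAt (fun s => (γ s).re) (deriv γ t).re t :=
    reCLM.hasFDerivAt.comp_hasDerivAt t hdγ
  have hderiv_im : HasDerivAt (fun s => (deriv γ s).im) (deriv (deriv γ) t).im t :=
    imCLM.hasFDerivAt.comp_hasDerivAt t hddγ
  exact ((hderiv_im.const_mul a).sub hre).congr_deriv (by rw [hγ''_im]; ring)

lemma strictAntiOn_mul_im_deriv_sub_re {γ : ℝ → ℂ} (hγ : ContDiff ℝ 2 γ) {a p q : ℝ}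
    (ha : 0 < a) (hunit : ∀ t ∈ Ioo p q, ‖deriv γ t‖ = 1)
    (hcurv : ∀ t ∈ Ioo p q, a⁻¹ < curvU γ t) (hleft : ∀ t ∈ Ioo p q, (deriv γ t).re < 0) :
    StrictAntiOn (fun s => a * (deriv γ s).im - (γ s).re) (Icc p q) := by
  have hγ' : ContDiff ℝ 1 (deriv γ) := hγ.iterate_deriv' 1 1
  refine strictAntiOn_of_deriv_neg (convex_Icc p q) ?_ fun t ht => ?_
  · exact ((continuous_const.mul (continuous_im.comp hγ'.continuous)).sub
      (continuous_re.comp hγ.continuous)).continuousOn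
  rw [interior_Icc] at ht
  have hunit_nhds : ∀ᶠ s in 𝓝 t, ‖deriv γ s‖ = 1 :=
    eventually_of_mem (Ioo_mem_nhds ht.1 ht.2) hunit
  rw [(hasDerivAt_mul_im_deriv_sub_re hγ a hunit_nhds).deriv]
  have hak : 1 < a * curvU γ t := by
    simpa [ha.ne'] using mul_lt_mul_of_pos_left (hcurv t ht) ha
  exact mul_neg_of_pos_of_neg (by linarith) (hleft t ht)

theorem stmt3_general (a b L : ℝ) (ha : 0 < a) (hL : 0 < L) (γ : ℝ → ℂ) (θ : ℝ → ℝ)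
    (hγ : ContDiff ℝ 2 γ)
    (hunit : ∀ t ∈ Icc 0 L, ‖deriv γ t‖ = 1)
    (h0 : γ 0 = (a : ℂ)) (h1 : γ L = Complex.mk (-a) b)
    (hθmono : StrictMonoOn θ (Icc 0 L))
    (hθlift : ∀ t ∈ Icc 0 L, deriv γ t = Complex.exp ((θ t : ℂ) * Complex.I))
    (hθ0 : π / 2 ≤ θ 0) (hθL' : θ L ≤ 3 * π / 2) :
    ∃ t ∈ Icc 0 L, curvU γ t ≤ a⁻¹ := by
  by_contra! hcurv
  have h0L : (0 : ℝ) ∈ Icc 0 L := left_mem_Icc.mpr hL.le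
  have hLL : L ∈ Icc 0 L := right_mem_Icc.mpr hL.le
  have hleft : ∀ t ∈ Ioo 0 L, (deriv γ t).re < 0 := fun t ht => by
    have htL := Ioo_subset_Icc_self ht
    rw [hθlift t htL, exp_ofReal_mul_I_re]
    exact cos_neg_of_pi_div_two_lt_of_lt (hθ0.trans_lt (hθmono h0L htL ht.1))
      (by linarith [hθmono htL hLL ht.2])
  have hdecr := strictAntiOn_mul_im_deriv_sub_re hγ ha
    (fun t ht => hunit t (Ioo_subset_Icc_self ht))
    (fun t ht => hcurv t (Ioo_subset_Icc_self ht)) hleft h0L hLL hL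
  simp only [hθlift 0 h0L, hθlift L hLL, h0, h1, exp_ofReal_mul_I_im, ofReal_re] at hdecr
  nlinarith [sin_le_one (θ 0), neg_one_le_sin (θ L)]

theorem stmt3 (a b L : ℝ) (ha : 0 < a) (hL : 0 < L) (γ : ℝ → ℂ) (θ : ℝ → ℝ)
    (hγ : ContDiff ℝ 2 γ)
    (hunit : ∀ t ∈ Icc 0 L, ‖deriv γ t‖ = 1)
    (hcurv : ∀ t ∈ Icc 0 L, 0 < curvU γ t)
    (h0 : γ 0 = (a : ℂ)) (h1 : γ L = Complex.mk (-a) b)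
    (hθcont : ContinuousOn θ (Icc 0 L))
    (hθmono : StrictMonoOn θ (Icc 0 L))
    (hθlift : ∀ t ∈ Icc 0 L, deriv γ t = Complex.exp ((θ t : ℂ) * Complex.I))
    (hθ0 : π / 2 ≤ θ 0) (hθ0' : θ 0 < π) (hθL : π < θ L) (hθL' : θ L ≤ 3 * π / 2) :
    ∃ t ∈ Icc 0 L, curvU γ t ≤ a⁻¹ :=
  stmt3_general a b L ha hL γ θ hγ hunit h0 h1 hθmono hθlift hθ0 hθL'
end

section
/- Let ω ∈ (0, π). Then for every pair α, β ∈ C²([0,1],ℝ) with α(0)=α(1)=β(0)=β(1)=0, if -α'' - ω²α = 0 and -β'' - 2ωα' + ω²β = 0 on [0,1], then α ≡ 0 and β ≡ 0. (Injectivity of the linearization at the small circular arc.) -/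
open Real Set Complex

/-!
Both equations are of the form `φ'' = k φ` with constant `k`: first `α'' = -ω² α`, and then,
once `α ≡ 0`, `β'' = ω² β`. The Wronskian of two solutions is constant, so pairing a solution
with `φ(0) = 0` against the fundamental pair `s, c` (`s(0) = 0, s'(0) = 1`, `c(0) = 1, c'(0) = 0`)
gives `φ = φ'(0) s` and `φ' = φ'(0) s'`. Here `s(t) = sin(ωt)/ω`, resp. `sinh(ωt)/ω`, so
`s(1) ≠ 0` because `0 < ω < π`, and `φ(1) = 0` forces `φ'(0) = 0`.
-/

def SolvesLinearODEOn (k : ℝ) (f f' : ℝ → ℝ) (S : Set ℝ) : Prop :=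
  ∀ t ∈ S, HasDerivAt f (f' t) t ∧ HasDerivAt f' (k * f t) t

namespace SolvesLinearODEOn

variable {k a b : ℝ} {f f' g g' s s' c c' : ℝ → ℝ}

theorem wronskian_eq (hf : SolvesLinearODEOn k f f' (Icc a b))
    (hg : SolvesLinearODEOn k g g' (Icc a b)) :
    ∀ t ∈ Icc a b, f' t * g t - f t * g' t = f' a * g a - f a * g' a := by
  have hderiv : ∀ t ∈ Icc a b,
      HasDerivAt (fun t => f' t * g t - f t * g' t) 0 t := fun t ht => by
    have h := ((hf t ht).2.mul (hg t ht).1).sub ((hf t ht).1.mul (hg t ht).2)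
    exact h.congr_deriv (by ring)
  exact constant_of_has_deriv_right_zero (HasDerivAt.continuousOn hderiv)
    fun t ht => (hderiv t (Ico_subset_Icc_self ht)).hasDerivWithinAt

theorem eq_mul_of_fundamental (hf : SolvesLinearODEOn k f f' (Icc 0 b))
    (hs : SolvesLinearODEOn k s s' (Icc 0 b)) (hc : SolvesLinearODEOn k c c' (Icc 0 b))
    (hs0 : s 0 = 0) (hs'0 : s' 0 = 1) (hc0 : c 0 = 1) (hc'0 : c' 0 = 0) (hf0 : f 0 = 0) :
    ∀ t ∈ Icc 0 b, f t = f' 0 * s t ∧ f' t = f' 0 * s' t := by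
  intro t ht
  have hfs := hf.wronskian_eq hs t ht
  have hfc := hf.wronskian_eq hc t ht
  have hsc := hs.wronskian_eq hc t ht
  simp only [hs0, hs'0, hc0, hc'0, hf0] at hfs hfc hsc
  constructor
  · linear_combination s t * hfc - c t * hfs - f t * hsc
  · linear_combination s' t * hfc - c' t * hfs - f' t * hsc

theorem eq_zero_of_fundamental (hf : SolvesLinearODEOn k f f' (Icc 0 b))
    (hs : SolvesLinearODEOn k s s' (Icc 0 b)) (hc : SolvesLinearODEOn k c c' (Icc 0 b))
    (hs0 : s 0 = 0) (hs'0 : s' 0 = 1) (hc0 : c 0 = 1) (hc'0 : c' 0 = 0)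
    (hb : 0 ≤ b) (hsb : s b ≠ 0) (hf0 : f 0 = 0) (hfb : f b = 0) :
    ∀ t ∈ Icc 0 b, f t = 0 ∧ f' t = 0 := by
  have hf_eq := hf.eq_mul_of_fundamental hs hc hs0 hs'0 hc0 hc'0 hf0
  have hf'0 : f' 0 = 0 := by
    have h := (hf_eq b ⟨hb, le_rfl⟩).1
    rw [hfb, eq_comm, mul_eq_zero] at h
    exact h.resolve_right hsb
  intro t ht
  simp [hf_eq t ht, hf'0]

end SolvesLinearODEOn

theorem ContDiff.solvesLinearODEOn {k : ℝ} {f : ℝ → ℝ} {S : Set ℝ} (hf : ContDiff ℝ 2 f)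
    (hf'' : ∀ t ∈ S, deriv (deriv f) t = k * f t) : SolvesLinearODEOn k f (deriv f) S := by
  have hf' : ContDiff ℝ 1 (deriv f) := hf.iterate_deriv' 1 1
  refine fun t ht => ⟨(hf.differentiable two_ne_zero t).hasDerivAt, ?_⟩
  rw [← hf'' t ht]
  exact (hf'.differentiable one_ne_zero t).hasDerivAt

section Fundamental

variable {ω : ℝ}

theorem solvesLinearODEOn_sin (hω : ω ≠ 0) (S : Set ℝ) :
    SolvesLinearODEOn (-ω ^ 2) (fun t => Real.sin (ω * t) / ω) (fun t => Real.cos (ω * t)) S :=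
  fun t _ => ⟨((hasDerivAt_const_mul ω).sin.div_const ω).congr_deriv (by field_simp),
    (hasDerivAt_const_mul ω).cos.congr_deriv (by field_simp)⟩

theorem solvesLinearODEOn_cos (S : Set ℝ) :
    SolvesLinearODEOn (-ω ^ 2) (fun t => Real.cos (ω * t)) (fun t => -ω * Real.sin (ω * t)) S :=
  fun t _ => ⟨(hasDerivAt_const_mul ω).cos.congr_deriv (by ring),
    ((hasDerivAt_const_mul ω).sin.const_mul (-ω)).congr_deriv (by ring)⟩

theorem solvesLinearODEOn_sinh (hω : ω ≠ 0) (S : Set ℝ) :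
    SolvesLinearODEOn (ω ^ 2) (fun t => Real.sinh (ω * t) / ω) (fun t => Real.cosh (ω * t)) S :=
  fun t _ => ⟨((hasDerivAt_const_mul ω).sinh.div_const ω).congr_deriv (by field_simp),
    (hasDerivAt_const_mul ω).cosh.congr_deriv (by field_simp)⟩

theorem solvesLinearODEOn_cosh (S : Set ℝ) :
    SolvesLinearODEOn (ω ^ 2) (fun t => Real.cosh (ω * t)) (fun t => ω * Real.sinh (ω * t)) S :=
  fun t _ => ⟨(hasDerivAt_const_mul ω).cosh.congr_deriv (by ring),
    ((hasDerivAt_const_mul ω).sinh.const_mul ω).congr_deriv (by ring)⟩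

end Fundamental

theorem stmt11 (ω : ℝ) (hω0 : 0 < ω) (hωπ : ω < π) (α β : ℝ → ℝ)
    (hα : ContDiff ℝ 2 α) (hβ : ContDiff ℝ 2 β)
    (hα0 : α 0 = 0) (hα1 : α 1 = 0) (hβ0 : β 0 = 0) (hβ1 : β 1 = 0)
    (heq1 : ∀ t ∈ Icc (0:ℝ) 1, -(deriv (deriv α) t) - ω ^ 2 * α t = 0)
    (heq2 : ∀ t ∈ Icc (0:ℝ) 1, -(deriv (deriv β) t) - 2 * ω * deriv α t + ω ^ 2 * β t = 0) :
    (∀ t ∈ Icc (0:ℝ) 1, α t = 0) ∧ (∀ t ∈ Icc (0:ℝ) 1, β t = 0) := by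
  have hω : ω ≠ 0 := hω0.ne'
  have hαODE : SolvesLinearODEOn (-ω ^ 2) α (deriv α) (Icc 0 1) :=
    hα.solvesLinearODEOn fun t ht => by linarith [heq1 t ht]
  have hα_zero := hαODE.eq_zero_of_fundamental (solvesLinearODEOn_sin hω _)
    (solvesLinearODEOn_cos _) (by simp) (by simp) (by simp) (by simp) zero_le_one
    (by simpa [hω] using (sin_pos_of_pos_of_lt_pi hω0 hωπ).ne') hα0 hα1
  have hβODE : SolvesLinearODEOn (ω ^ 2) β (deriv β) (Icc 0 1) :=
    hβ.solvesLinearODEOn fun t ht => by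
      linear_combination -heq2 t ht - 2 * ω * (hα_zero t ht).2
  have hβ_zero := hβODE.eq_zero_of_fundamental (solvesLinearODEOn_sinh hω _)
    (solvesLinearODEOn_cosh _) (by simp) (by simp) (by simp) (by simp) zero_le_one
    (by simp [hω, (sinh_pos_iff.mpr hω0).ne']) hβ0 hβ1
  exact ⟨fun t ht => (hα_zero t ht).1, fun t ht => (hβ_zero t ht).1⟩
end

section
/- Let a > 0 and let γ : [0,L] → ℝ² be a C² unit-speed curve with geodesic curvature satisfying 0 < k_γ(t) ≤ k_max < a⁻¹ for all t, from (a,0) to (-a,0), with γ ⊕ [-a,a] simple, γ'(0) = e^{-iπ/2}, and strictly increasing tangent angle θ ∈ (-π/2, 5π/2] with θ(L) ∈ (π, 5π/2]. Let t₀ = sup{ t : θ(s) ≤ π/2 for all s ≤ t }. Then t₀ < L, θ(t₀) = π/2, and the first coordinate of γ(t₀) satisfies γ₁(t₀) ≥ a + 2/k_max. -/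
/-!
Up to the first time `t₀` at which the tangent angle reaches `π/2` the curve moves rightwards
(`Re γ' = cos θ ≥ 0`), and for a unit-speed curve `(Im γ')' = κ · Re γ' ≤ kmax · Re γ'`.
Hence the barrier `kmax · Re γ - Im γ'` is nondecreasing on `[0, t₀]`; since `γ' = -i` at `0`
and `γ' = i` at `t₀`, this reads `kmax · a + 1 ≤ kmax · Re γ(t₀) - 1`.
-/

open Real Set Complex

theorem re_sq_add_im_sq_eq_one_of_norm_eq_one {z : ℂ} (hz : ‖z‖ = 1) :
    z.re ^ 2 + z.im ^ 2 = 1 := by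
  linear_combination -Complex.sq_norm z - Complex.normSq_apply z + (‖z‖ + 1) * hz

theorem inner2_deriv_self_eq_zero_of_norm_eventually_eq_one {f : ℝ → ℂ} {t : ℝ}
    (hf : DifferentiableAt ℝ f t) (hnorm : ∀ᶠ s in nhds t, ‖f s‖ = 1) :
    inner2 (deriv f t) (f t) = 0 := by
  have hsq : HasDerivAt (fun s => (f s).re ^ 2 + (f s).im ^ 2)
      (2 * inner2 (deriv f t) (f t)) t := by
    have hre : HasDerivAt (fun s => (f s).re) (deriv f t).re t :=
      Complex.reCLM.hasFDerivAt.comp_hasDerivAt t hf.hasDerivAt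
    have him : HasDerivAt (fun s => (f s).im) (deriv f t).im t :=
      Complex.imCLM.hasFDerivAt.comp_hasDerivAt t hf.hasDerivAt
    exact ((hre.fun_pow 2).add (him.fun_pow 2)).congr_deriv (by simp only [inner2]; ring)
  have hconst : HasDerivAt (fun s => (f s).re ^ 2 + (f s).im ^ 2) 0 t := by
    refine (hasDerivAt_const t (1 : ℝ)).congr_of_eventuallyEq ?_
    filter_upwards [hnorm] with s hs
    exact re_sq_add_im_sq_eq_one_of_norm_eq_one hs
  linarith [hsq.unique hconst]

/-- A vector orthogonal to a unit vector `u` is a multiple of `I * u`. -/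
theorem im_eq_inner2_mul_re_of_inner2_eq_zero {u v : ℂ} (hu : ‖u‖ = 1)
    (hvu : inner2 v u = 0) : v.im = inner2 v (Complex.I * u) * u.re := by
  have hnorm := re_sq_add_im_sq_eq_one_of_norm_eq_one hu
  simp only [inner2, Complex.mul_re, Complex.mul_im, Complex.I_re, Complex.I_im] at hvu ⊢
  linear_combination u.im * hvu - v.im * hnorm

theorem hasDerivAt_curvature_barrier {γ : ℝ → ℂ} (hγ : ContDiff ℝ 2 γ) (k t : ℝ) :
    HasDerivAt (fun s => k * (γ s).re - (deriv γ s).im)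
      (k * (deriv γ t).re - (deriv (deriv γ) t).im) t := by
  have hγ' : ContDiff ℝ 1 (deriv γ) := hγ.iterate_deriv' 1 1
  have hre := Complex.reCLM.hasFDerivAt.comp_hasDerivAt t
    ((hγ.differentiable (by norm_num)) t).hasDerivAt
  have him := Complex.imCLM.hasFDerivAt.comp_hasDerivAt t
    ((hγ'.differentiable (by norm_num)) t).hasDerivAt
  exact (hre.const_mul k).sub him

theorem monotoneOn_curvature_barrier {γ : ℝ → ℂ} {k p q : ℝ} (hγ : ContDiff ℝ 2 γ)
    (hunit : ∀ t ∈ Icc p q, ‖deriv γ t‖ = 1) (hcurv : ∀ t ∈ Ioo p q, curvU γ t ≤ k)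
    (hre : ∀ t ∈ Ioo p q, 0 ≤ (deriv γ t).re) :
    MonotoneOn (fun s => k * (γ s).re - (deriv γ s).im) (Icc p q) := by
  refine monotoneOn_of_hasDerivWithinAt_nonneg (convex_Icc p q)
    (fun t _ => (hasDerivAt_curvature_barrier hγ k t).continuousAt.continuousWithinAt)
    (fun t _ => (hasDerivAt_curvature_barrier hγ k t).hasDerivWithinAt) ?_
  intro t ht
  rw [interior_Icc] at ht
  have hγ'd : DifferentiableAt ℝ (deriv γ) t :=
    (hγ.iterate_deriv' 1 1).differentiable (by norm_num) t
  have hperp : inner2 (deriv (deriv γ) t) (deriv γ t) = 0 :=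
    inner2_deriv_self_eq_zero_of_norm_eventually_eq_one hγ'd <| by
      filter_upwards [Ioo_mem_nhds ht.1 ht.2] with s hs
      exact hunit s (Ioo_subset_Icc_self hs)
  have him : (deriv (deriv γ) t).im = curvU γ t * (deriv γ t).re :=
    im_eq_inner2_mul_re_of_inner2_eq_zero (hunit t (Ioo_subset_Icc_self ht)) hperp
  rw [him, ← sub_mul]
  exact mul_nonneg (sub_nonneg.mpr (hcurv t ht)) (hre t ht)

theorem sSup_prefix_le_eq_of_strictMonoOn {θ : ℝ → ℝ} {L c t₁ : ℝ}
    (hθ : StrictMonoOn θ (Icc 0 L)) (ht₁ : t₁ ∈ Icc 0 L) (hθt₁ : θ t₁ = c) :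
    sSup {t | t ∈ Icc 0 L ∧ ∀ s ∈ Icc 0 t, θ s ≤ c} = t₁ := by
  suffices {t | t ∈ Icc 0 L ∧ ∀ s ∈ Icc 0 t, θ s ≤ c} = Icc 0 t₁ by
    rw [this, csSup_Icc ht₁.1]
  ext t
  constructor
  · rintro ⟨htL, hle⟩
    refine ⟨htL.1, not_lt.mp fun hlt => ?_⟩
    linarith [hθ ht₁ htL hlt, hle t ⟨htL.1, le_rfl⟩]
  · rintro ⟨ht0, htt₁⟩
    refine ⟨⟨ht0, htt₁.trans ht₁.2⟩, fun s hs => hθt₁ ▸ ?_⟩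
    exact hθ.monotoneOn ⟨hs.1, hs.2.trans (htt₁.trans ht₁.2)⟩ ht₁ (hs.2.trans htt₁)

theorem stmt19_general (a L kmax : ℝ) (hL : 0 < L) (γ : ℝ → ℂ) (θ : ℝ → ℝ)
    (hγ : ContDiff ℝ 2 γ)
    (hunit : ∀ t ∈ Icc 0 L, ‖deriv γ t‖ = 1)
    (hcurv : ∀ t ∈ Icc 0 L, 0 < curvU γ t ∧ curvU γ t ≤ kmax)
    (h0 : γ 0 = (a : ℂ))
    (hθcont : ContinuousOn θ (Icc 0 L)) (hθmono : StrictMonoOn θ (Icc 0 L))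
    (hθlift : ∀ t ∈ Icc 0 L, deriv γ t = Complex.exp ((θ t : ℂ) * Complex.I))
    (hθinit : θ 0 = -(π / 2))
    (hθL : π < θ L)
    (t₀ : ℝ) (ht₀ : t₀ = sSup {t | t ∈ Icc 0 L ∧ ∀ s ∈ Icc 0 t, θ s ≤ π / 2}) :
    t₀ < L ∧ θ t₀ = π / 2 ∧ a + 2 / kmax ≤ (γ t₀).re := by
  have h0L : (0 : ℝ) ∈ Icc 0 L := ⟨le_rfl, hL.le⟩
  obtain ⟨t₁, ht₁, hθt₁⟩ : ∃ t₁ ∈ Icc 0 L, θ t₁ = π / 2 :=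
    intermediate_value_Icc hL.le hθcont ⟨by linarith [pi_pos], by linarith [pi_pos]⟩
  obtain rfl : t₀ = t₁ := ht₀.trans (sSup_prefix_le_eq_of_strictMonoOn hθmono ht₁ hθt₁)
  refine ⟨ht₁.2.lt_of_ne fun h => by rw [h] at hθt₁; linarith [pi_pos], hθt₁, ?_⟩
  have hsub : Icc 0 t₀ ⊆ Icc 0 L := Icc_subset_Icc_right ht₁.2
  have hk : 0 < kmax := (hcurv 0 h0L).1.trans_le (hcurv 0 h0L).2
  have hrightward : ∀ t ∈ Ioo 0 t₀, 0 ≤ (deriv γ t).re := by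
    intro t ht
    have htL := hsub (Ioo_subset_Icc_self ht)
    rw [hθlift t htL, Complex.exp_ofReal_mul_I_re]
    refine cos_nonneg_of_mem_Icc ⟨?_, ?_⟩
    · exact hθinit ▸ hθmono.monotoneOn h0L htL ht.1.le
    · exact hθt₁ ▸ hθmono.monotoneOn htL ht₁ ht.2.le
  have hbarrier : kmax * a + 1 ≤ kmax * (γ t₀).re - 1 := by
    have := monotoneOn_curvature_barrier hγ (fun t ht => hunit t (hsub ht))
      (fun t ht => (hcurv t (hsub (Ioo_subset_Icc_self ht))).2) hrightward
      ⟨le_rfl, ht₁.1⟩ ⟨ht₁.1, le_rfl⟩ ht₁.1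
    simpa only [hθlift 0 h0L, hθlift t₀ ht₁, Complex.exp_ofReal_mul_I_im, hθinit, hθt₁,
      Real.sin_neg, Real.sin_pi_div_two, h0, Complex.ofReal_re, sub_neg_eq_add] using this
  have hgap : 2 / kmax ≤ (γ t₀).re - a := by
    rw [div_le_iff₀ hk]
    linarith
  linarith

theorem stmt19 (a L kmax : ℝ) (ha : 0 < a) (hL : 0 < L) (γ : ℝ → ℂ) (θ : ℝ → ℝ)
    (hγ : ContDiff ℝ 2 γ)
    (hunit : ∀ t ∈ Icc 0 L, ‖deriv γ t‖ = 1)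
    (hcurv : ∀ t ∈ Icc 0 L, 0 < curvU γ t ∧ curvU γ t ≤ kmax)
    (hkmax : kmax < a⁻¹)
    (h0 : γ 0 = (a : ℂ)) (h1 : γ L = (-a : ℂ))
    (hsimple : Set.InjOn (concatSeg γ L a) (Ico 0 (L + 2 * a)))
    (hd0 : deriv γ 0 = Complex.exp ((-(π / 2) : ℂ) * Complex.I))
    (hθcont : ContinuousOn θ (Icc 0 L)) (hθmono : StrictMonoOn θ (Icc 0 L))
    (hθlift : ∀ t ∈ Icc 0 L, deriv γ t = Complex.exp ((θ t : ℂ) * Complex.I))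
    (hθinit : θ 0 = -(π / 2))
    (hθrange : ∀ t ∈ Icc 0 L, -(π / 2) < θ t ∨ t = 0)
    (hθrange' : ∀ t ∈ Icc 0 L, θ t ≤ 5 * π / 2)
    (hθL : π < θ L)
    (t₀ : ℝ) (ht₀ : t₀ = sSup {t | t ∈ Icc 0 L ∧ ∀ s ∈ Icc 0 t, θ s ≤ π / 2}) :
    t₀ < L ∧ θ t₀ = π / 2 ∧ a + 2 / kmax ≤ (γ t₀).re :=
  stmt19_general a L kmax hL γ θ hγ hunit hcurv h0 hθcont hθmono hθlift hθinit hθL t₀ ht₀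
end
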